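/- arXiv:1904.06742 — 3 statements merged into one kernel-verified Lean document; each statement's English description precedes it below -/
import Mathlib

section
/- Let Y be a finite set with a strict linear order ≻ and let Q, Q' : Y → (0,1). Define P(v) = Q(v)·∏_{v'≻v}(1-Q(v')) and P'(v) = Q'(v)·∏_{v'≻v}(1-Q'(v')) for all v ∈ Y. If P(v) = P'(v) for all v ∈ Y, then Q(v) = Q'(v) for all v ∈ Y. -/
theorem stmt_6 (Y : Type*) [Fintype Y] [LinearOrder Y] (Q Q' : Y → ℝ)
    (hQ : ∀ v, Q v ∈ Set.Ioo (0:ℝ) 1) (hQ' : ∀ v, Q' v ∈ Set.Ioo (0:ℝ) 1)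
    (hP : ∀ v, Q v * ∏ v' ∈ Finset.univ.filter (fun v' => v < v'), (1 - Q v')
             = Q' v * ∏ v' ∈ Finset.univ.filter (fun v' => v < v'), (1 - Q' v')) :
    ∀ v, Q v = Q' v := by
  intro v
  refine (wellFounded_gt (α := Y)).induction (C := fun v => Q v = Q' v) v ?_
  intro v ih
  have hprod : ∏ v' ∈ Finset.univ.filter (fun v' => v < v'), (1 - Q v')
      = ∏ v' ∈ Finset.univ.filter (fun v' => v < v'), (1 - Q' v') := by
    refine Finset.prod_congr rfl fun v' hv' => ?_
    rw [ih v' (Finset.mem_filter.mp hv').2]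
  have hpos : (0:ℝ) < ∏ v' ∈ Finset.univ.filter (fun v' => v < v'), (1 - Q' v') :=
    Finset.prod_pos fun v' _ => by linarith [(hQ' v').2]
  have h := hP v
  rw [hprod] at h
  exact mul_right_cancel₀ (ne_of_gt hpos) h
end

section
/- Let Y be a finite set and η : powerset(Y) → ℝ≥0 a multiplicative attention index, i.e., η(C) = ∏_{v∈C} η({v}) with η(∅) = 1 and η({v}) > 0 for all v. Define Q(v) = η({v})/(1 + η({v})). Then Q(v) ∈ (0,1) for all v, and for every A ⊆ Y the consideration probability η(A)/∑_{C⊆Y} η(C) equals ∏_{v∈A} Q(v) · ∏_{v∈Y\A}(1-Q(v)). -/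
/-! The normalising constant of a multiplicative index factorises, `∑_{C ⊆ Y} ∏_{v ∈ C} η{v} =
∏_{v ∈ Y} (1 + η{v})`, so `η(A) / ∑_C η(C)` splits into one factor per alternative: `η{v}/(1 + η{v})`
for `v ∈ A` and `1/(1 + η{v}) = 1 - Q(v)` for `v ∉ A`. -/

open Finset

theorem div_one_add_mem_Ioo {x : ℝ} (hx : 0 < x) : x / (1 + x) ∈ Set.Ioo 0 1 :=
  ⟨by positivity, (div_lt_one (by positivity)).2 (lt_one_add x)⟩

theorem one_sub_div_one_add {K : Type*} [Field K] {x : K} (hx : 1 + x ≠ 0) :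
    1 - x / (1 + x) = (1 + x)⁻¹ := by
  field_simp
  ring

theorem prod_div_one_add_mul_prod_compl_one_sub {ι K : Type*} [Fintype ι] [DecidableEq ι]
    [Field K] (w : ι → K) (hw : ∀ i, 1 + w i ≠ 0) (A : Finset ι) :
    (∏ i ∈ A, w i / (1 + w i)) * ∏ i ∈ Aᶜ, (1 - w i / (1 + w i))
      = (∏ i ∈ A, w i) / ∏ i, (1 + w i) := by
  rw [← prod_mul_prod_compl A (fun i => 1 + w i), prod_div_distrib,
    prod_congr rfl fun i _ => one_sub_div_one_add (hw i), prod_inv_distrib]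
  ring

theorem stmt_9_general (Y : Type*) [Fintype Y] [DecidableEq Y] (η : Finset Y → ℝ)
    (hmult : ∀ C : Finset Y, η C = ∏ v ∈ C, η {v})
    (hpos : ∀ v : Y, 0 < η {v}) (Q : Y → ℝ) (hQ : ∀ v, Q v = η {v} / (1 + η {v})) :
    (∀ v, Q v ∈ Set.Ioo (0:ℝ) 1)
    ∧ ∀ A : Finset Y,
        η A / (∑ C ∈ (Finset.univ : Finset Y).powerset, η C)
          = (∏ v ∈ A, Q v) * ∏ v ∈ Aᶜ, (1 - Q v) := by
  obtain rfl : Q = fun v => η {v} / (1 + η {v}) := funext hQ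
  refine ⟨fun v => div_one_add_mem_Ioo (hpos v), fun A => ?_⟩
  have hnorm : ∑ C ∈ univ.powerset, η C = ∏ v, (1 + η {v}) := by
    rw [prod_one_add]
    exact sum_congr rfl fun C _ => hmult C
  rw [prod_div_one_add_mul_prod_compl_one_sub _ (fun v => (add_pos one_pos (hpos v)).ne'),
    hnorm, hmult A]

theorem stmt_9 (Y : Type*) [Fintype Y] [DecidableEq Y] (η : Finset Y → ℝ)
    (hempty : η ∅ = 1) (hmult : ∀ C : Finset Y, η C = ∏ v ∈ C, η {v})
    (hpos : ∀ v : Y, 0 < η {v}) (Q : Y → ℝ) (hQ : ∀ v, Q v = η {v} / (1 + η {v})) :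
    (∀ v, Q v ∈ Set.Ioo (0:ℝ) 1)
    ∧ ∀ A : Finset Y,
        η A / (∑ C ∈ (Finset.univ : Finset Y).powerset, η C)
          = (∏ v ∈ A, Q v) * ∏ v ∈ Aᶜ, (1 - Q v) :=
  stmt_9_general Y η hmult hpos Q hQ
end

section
/- Let Y = {1, …, Y} with order Y ≻ … ≻ 1 and let η : powerset(Y) → ℝ≥0 with η(∅) = 1 satisfy η(C) = c_{|C|} for all C (attention depends only on cardinality), for some sequence c_0 = 1, c_1, c_2, …, c_Y > 0. Suppose positive reals p_1, …, p_Y, p_o satisfy p_k/p_o = ∑_{j=0}^{k-1} binom(k-1, j) · c_{j+1} for each k = 1, …, Y. Then the sequence (c_1, …, c_Y) is uniquely determined by (p_1, …, p_Y, p_o). -/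
theorem stmt_17 (Y : ℕ) (p : ℕ → ℝ) (po : ℝ)
    (hp : ∀ k ∈ Finset.Icc 1 Y, 0 < p k) (hpo : 0 < po)
    (c c' : ℕ → ℝ) (hc0 : c 0 = 1) (hc0' : c' 0 = 1)
    (hcpos : ∀ j ∈ Finset.Icc 1 Y, 0 < c j) (hcpos' : ∀ j ∈ Finset.Icc 1 Y, 0 < c' j)
    (heq : ∀ k ∈ Finset.Icc 1 Y,
        p k / po = ∑ j ∈ Finset.range k, ((k - 1).choose j : ℝ) * c (j + 1))
    (heq' : ∀ k ∈ Finset.Icc 1 Y,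
        p k / po = ∑ j ∈ Finset.range k, ((k - 1).choose j : ℝ) * c' (j + 1)) :
    ∀ j ∈ Finset.Icc 1 Y, c j = c' j := by
  intro j hj
  induction j using Nat.strong_induction_on with
  | _ j ih =>
    obtain ⟨h1, h2⟩ := Finset.mem_Icc.mp hj
    have e := (heq j hj).symm.trans (heq' j hj)
    obtain ⟨m, rfl⟩ : ∃ m, j = m + 1 := ⟨j - 1, by omega⟩
    rw [Finset.sum_range_succ, Finset.sum_range_succ] at e
    have hsum : ∑ i ∈ Finset.range m, ((m + 1 - 1).choose i : ℝ) * c (i + 1)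
        = ∑ i ∈ Finset.range m, ((m + 1 - 1).choose i : ℝ) * c' (i + 1) := by
      refine Finset.sum_congr rfl fun i hi => ?_
      have hi' := Finset.mem_range.mp hi
      rw [ih (i + 1) (by omega) (Finset.mem_Icc.mpr ⟨by omega, by omega⟩)]
    rw [hsum] at e
    have := add_left_cancel e
    simpa [Nat.choose_self] using this
end
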